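/- arXiv:1310.1423 — 3 statements merged into one kernel-verified Lean document; each statement's English description precedes it below -/
import Mathlib

section
/- For every dimension d ≥ 1, the integral over the cube [-1,1]^{d-1} of 1/(1 + x_1^2 + ... + x_{d-1}^2)^{d/2} with respect to dx_1...dx_{d-1} equals (1/d) · π^{d/2} / Γ(d/2). -/
/-!
Up to null sets, the open unit ball of `ℝ^d` is tiled by the `2d` pyramids on which one signed
coordinate dominates all the others in absolute value, and coordinate permutations and the
reflection `y ↦ -y` show that these pyramids all have the same volume. Splitting `y = (t, x)`
with `x = t • u`, the pyramid over the face `y₀ = 1` is the cone of points `(t, t • u)` with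
`u ∈ [-1,1]^{d-1}` and `0 < t < (1 + ‖u‖²)^{-1/2}`; integrating `t^{d-1}` over each ray gives
its volume `(1/d) ∫ (1 + ‖u‖²)^{-d/2} du`. Comparing `2d` times this with the volume
`π^{d/2} / Γ(d/2 + 1)` of the ball yields the formula.
-/

open MeasureTheory Set Real Pointwise

theorem lt_inv_sqrt_iff {t w : ℝ} (ht : 0 ≤ t) (hw : 0 < w) : t < (√w)⁻¹ ↔ t ^ 2 * w < 1 := by
  rw [← pow_lt_pow_iff_left₀ ht (by positivity) two_ne_zero, inv_pow, sq_sqrt hw.le,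
    inv_eq_one_div, lt_div_iff₀ hw]

theorem inv_sqrt_pow_eq_rpow {w : ℝ} (hw : 0 ≤ w) (k : ℕ) : (√w)⁻¹ ^ k = w ^ (-(k : ℝ) / 2) := by
  rw [sqrt_eq_rpow, ← rpow_neg hw, ← rpow_mul_natCast hw]
  ring_nf

theorem sqrt_pi_pow_div_Gamma {d : ℕ} (hd : d ≠ 0) :
    √π ^ d / Gamma (d / 2 + 1) = 2 * (1 / d * π ^ ((d : ℝ) / 2) / Gamma (d / 2)) := by
  have hd' : (0 : ℝ) < d := by positivity
  rw [Gamma_add_one (by positivity), sqrt_eq_rpow, ← rpow_mul_natCast pi_pos.le]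
  field_simp

theorem lintegral_Ioo_zero_pow {a : ℝ} (ha : 0 ≤ a) (n : ℕ) :
    ∫⁻ t in Ioo 0 a, ENNReal.ofReal (t ^ n) = ENNReal.ofReal (a ^ (n + 1) / (n + 1)) := by
  rw [← ofReal_integral_eq_lintegral_ofReal
    (((continuous_pow n).integrableOn_Icc (a := 0) (b := a)).mono_set Ioo_subset_Icc_self),
    ← integral_Ioc_eq_integral_Ioo, ← intervalIntegral.integral_of_le ha, integral_pow]
  · simp
  · filter_upwards [ae_restrict_mem measurableSet_Ioo] with t ht using pow_nonneg ht.1.le n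

theorem ite_neg_le_abs (b : Bool) (a : ℝ) : (if b then a else -a) ≤ |a| := by
  cases b
  · exact neg_le_abs a
  · exact le_abs_self a

section NullSets

variable {ι : Type*} [Fintype ι]

theorem volume_ker_eq_zero {L : (ι → ℝ) →ₗ[ℝ] ℝ} (hL : L ≠ 0) :
    volume (LinearMap.ker L : Set (ι → ℝ)) = 0 :=
  Measure.addHaar_submodule _ _ fun h => hL (LinearMap.ker_eq_top.mp h)

theorem volume_setOf_apply_eq_zero (i : ι) : volume {y : ι → ℝ | y i = 0} = 0 := by
  classical
  refine volume_ker_eq_zero (L := LinearMap.proj i) fun h => ?_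
  simpa using LinearMap.congr_fun h (Pi.single i 1)

theorem volume_setOf_abs_apply_eq_abs_apply {i j : ι} (hij : i ≠ j) :
    volume {y : ι → ℝ | |y i| = |y j|} = 0 := by
  classical
  have hL : ∀ c : ℝ, (LinearMap.proj i - c • LinearMap.proj j : (ι → ℝ) →ₗ[ℝ] ℝ) ≠ 0 :=
    fun c h => by simpa [Pi.single_apply, hij.symm] using LinearMap.congr_fun h (Pi.single i 1)
  refine measure_mono_null (fun y hy => ?_) (measure_union_null
    (volume_ker_eq_zero (hL 1)) (volume_ker_eq_zero (hL (-1))))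
  rcases abs_eq_abs.mp hy with h | h
  · left; simp [h]
  · right; simp [h]

end NullSets

namespace SolidAngle

variable {ι : Type*} [Fintype ι]

section Pyramid

def pyramid (i : ι) (b : Bool) : Set (ι → ℝ) :=
  {y | (∀ j, |y j| ≤ if b then y i else -y i) ∧ ∑ j, y j ^ 2 < 1}

theorem measurableSet_pyramid (i : ι) (b : Bool) : MeasurableSet (pyramid i b) := by
  refine .inter (measurableSet_setOfPred.2 <| Measurable.forall fun j =>
    measurableSet_setOfPred.1 <| measurableSet_le (f := fun y : ι → ℝ => |y j|) (by fun_prop) ?_)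
    (measurableSet_lt (f := fun y : ι → ℝ => ∑ j, y j ^ 2) (by fun_prop) measurable_const)
  cases b <;> simp only [Bool.false_eq_true, if_true, if_false] <;> fun_prop

theorem iUnion_pyramid [Nonempty ι] :
    ⋃ p : ι × Bool, pyramid p.1 p.2 = {y : ι → ℝ | ∑ j, y j ^ 2 < 1} := by
  ext y
  simp only [mem_iUnion, pyramid, mem_ofPred_eq, Prod.exists]
  refine ⟨fun ⟨_, _, _, h⟩ => h, fun h => ?_⟩
  obtain ⟨i, -, hi⟩ := Finset.exists_max_image Finset.univ (fun j => |y j|) Finset.univ_nonempty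
  refine ⟨i, decide (0 ≤ y i), fun j => (hi j (Finset.mem_univ j)).trans ?_, h⟩
  by_cases h0 : 0 ≤ y i
  · simp [h0, abs_of_nonneg]
  · simp [h0, abs_of_neg (not_le.mp h0)]

theorem pairwise_aedisjoint_pyramid :
    Pairwise (Function.onFun (AEDisjoint volume) fun p : ι × Bool => pyramid p.1 p.2) := by
  rintro ⟨i, b⟩ ⟨j, c⟩ hne
  by_cases hij : i = j
  · subst hij
    refine measure_mono_null (fun y ⟨⟨hb, _⟩, ⟨hc, _⟩⟩ => ?_) (volume_setOf_apply_eq_zero i)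
    have h1 := hb i
    have h2 := hc i
    show y i = 0
    cases b <;> cases c <;> simp only [ne_eq, not_true_eq_false] at hne <;>
      simp only [Bool.false_eq_true, if_true, if_false] at h1 h2 <;>
      linarith [le_abs_self (y i), neg_abs_le (y i)]
  · exact measure_mono_null (fun y ⟨⟨hb, _⟩, ⟨hc, _⟩⟩ =>
      le_antisymm ((hc i).trans (ite_neg_le_abs c _)) ((hb j).trans (ite_neg_le_abs b _)))
      (volume_setOf_abs_apply_eq_abs_apply hij)

theorem piCongrLeft_preimage_pyramid (σ : Equiv.Perm ι) (i : ι) (b : Bool) :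
    MeasurableEquiv.piCongrLeft (fun _ => ℝ) σ ⁻¹' pyramid i b = pyramid (σ.symm i) b := by
  ext y
  simp only [mem_preimage, pyramid, mem_ofPred_eq, MeasurableEquiv.coe_piCongrLeft,
    Equiv.piCongrLeft_apply, eq_rec_constant]
  rw [σ.symm.forall_congr_left, Equiv.sum_comp σ.symm (fun j => y j ^ 2)]
  simp only [Equiv.symm_symm, Equiv.symm_apply_apply]

theorem volume_pyramid_not (i : ι) (b : Bool) :
    volume (pyramid i !b) = volume (pyramid i b) := by
  rw [← (Measure.measurePreserving_neg volume).measure_preimage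
    (measurableSet_pyramid i b).nullMeasurableSet]
  congr 1
  ext y
  cases b <;> simp [pyramid]

theorem volume_pyramid_eq (i j : ι) (b c : Bool) :
    volume (pyramid i b) = volume (pyramid j c) := by
  classical
  have hbc : volume (pyramid i b) = volume (pyramid i c) := by
    rcases Bool.eq_or_eq_not b c with rfl | rfl
    · rfl
    · exact volume_pyramid_not i c
  rw [hbc, ← (volume_measurePreserving_piCongrLeft (fun _ => ℝ) (Equiv.swap i j)).measure_preimage
    (measurableSet_pyramid i c).nullMeasurableSet, piCongrLeft_preimage_pyramid,
    Equiv.symm_swap, Equiv.swap_apply_left]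

theorem volume_setOf_sum_sq_lt_one :
    volume {y : ι → ℝ | ∑ j, y j ^ 2 < 1} =
      ENNReal.ofReal (√π ^ Fintype.card ι / Gamma (Fintype.card ι / 2 + 1)) := by
  convert volume_sum_rpow_lt_one ι one_le_two using 4
  · simp [sq_abs]
  · rw [Gamma_add_one (by norm_num), Gamma_one_half_eq]
    ring

theorem two_mul_card_mul_volume_pyramid (i : ι) :
    2 * Fintype.card ι * volume (pyramid i true) =
      ENNReal.ofReal (√π ^ Fintype.card ι / Gamma (Fintype.card ι / 2 + 1)) := by
  have : Nonempty ι := ⟨i⟩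
  rw [← volume_setOf_sum_sq_lt_one, ← iUnion_pyramid, measure_iUnion₀ pairwise_aedisjoint_pyramid
    fun p => (measurableSet_pyramid p.1 p.2).nullMeasurableSet, tsum_fintype,
    Finset.sum_congr rfl fun p _ => volume_pyramid_eq p.1 i p.2 true, Finset.sum_const,
    Finset.card_univ, Fintype.card_prod, Fintype.card_bool, nsmul_eq_mul]
  push_cast
  ring

end Pyramid

section Cone

def coneBelow (A : Set (ι → ℝ)) (h : (ι → ℝ) → ℝ) : Set (ℝ × (ι → ℝ)) :=
  {p | 0 < p.1 ∧ p.1⁻¹ • p.2 ∈ A ∧ p.1 < h (p.1⁻¹ • p.2)}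

theorem measurableSet_coneBelow {A : Set (ι → ℝ)} (hA : MeasurableSet A) {h : (ι → ℝ) → ℝ}
    (hh : Measurable h) : MeasurableSet (coneBelow A h) := by
  have hf : Measurable fun p : ℝ × (ι → ℝ) => p.1⁻¹ • p.2 := by fun_prop
  exact (measurableSet_lt measurable_const measurable_fst).inter
    ((hf hA).inter (measurableSet_lt measurable_fst (hh.comp hf)))

theorem volume_preimage_mk_coneBelow (A : Set (ι → ℝ)) (h : (ι → ℝ) → ℝ) (t : ℝ) :
    volume (Prod.mk t ⁻¹' coneBelow A h) =
      if 0 < t then ENNReal.ofReal (t ^ Fintype.card ι) * volume (A ∩ {u | t < h u}) else 0 := by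
  split_ifs with ht
  · have : Prod.mk t ⁻¹' coneBelow A h = t • (A ∩ {u | t < h u}) := by
      ext x
      simp [coneBelow, mem_smul_set_iff_inv_smul_mem₀ ht.ne', ht]
    rw [this, Measure.addHaar_smul, Module.finrank_fintype_fun_eq_card, abs_of_pos (pow_pos ht _)]
  · have : Prod.mk t ⁻¹' coneBelow A h = ∅ := by
      ext x
      simp [coneBelow, ht]
    rw [this, measure_empty]

theorem volume_coneBelow {A : Set (ι → ℝ)} (hA : MeasurableSet A) {h : (ι → ℝ) → ℝ}
    (hh : Measurable h) (h0 : ∀ u, 0 ≤ h u) :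
    volume (coneBelow A h) =
      ∫⁻ u in A, ENNReal.ofReal (h u ^ (Fintype.card ι + 1) / (Fintype.card ι + 1)) := by
  have hmeas : Measurable fun p : ℝ × (ι → ℝ) =>
      if p.1 < h p.2 then ENNReal.ofReal (p.1 ^ Fintype.card ι) else 0 :=
    Measurable.ite (measurableSet_lt measurable_fst (hh.comp measurable_snd)) (by fun_prop)
      measurable_const
  calc volume (coneBelow A h)
      = ∫⁻ t in Ioi 0, ENNReal.ofReal (t ^ Fintype.card ι) * volume (A ∩ {u | t < h u}) := by
        rw [Measure.volume_eq_prod, Measure.prod_apply (measurableSet_coneBelow hA hh),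
          ← lintegral_indicator measurableSet_Ioi]
        congr with t
        rw [volume_preimage_mk_coneBelow]
        simp only [indicator_apply, mem_Ioi]
    _ = ∫⁻ t in Ioi 0, ∫⁻ u in A, if t < h u then ENNReal.ofReal (t ^ Fintype.card ι) else 0 := by
        congr with t
        have hs : MeasurableSet {u | t < h u} := measurableSet_lt measurable_const hh
        rw [inter_comm, ← Measure.restrict_apply hs, ← lintegral_indicator_const hs]
        congr with u
    _ = ∫⁻ u in A, ∫⁻ t in Ioi 0, if t < h u then ENNReal.ofReal (t ^ Fintype.card ι) else 0 :=
        lintegral_lintegral_swap hmeas.aemeasurable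
    _ = ∫⁻ u in A, ∫⁻ t in Ioo 0 (h u), ENNReal.ofReal (t ^ Fintype.card ι) := by
        congr with u
        rw [← Ioi_inter_Iio, inter_comm, ← Measure.restrict_restrict measurableSet_Iio,
          ← lintegral_indicator measurableSet_Iio]
        congr with t
    _ = _ := by
        congr with u
        exact lintegral_Ioo_zero_pow (h0 u) _

end Cone

section Face

theorem mem_pyramid_zero_true_iff {n : ℕ} {y : Fin (n + 1) → ℝ} (hy : y 0 ≠ 0) :
    y ∈ pyramid 0 true ↔ (y 0, Fin.tail y) ∈
      coneBelow (univ.pi fun _ => Icc (-1) 1) fun u => (√(1 + ∑ i, u i ^ 2))⁻¹ := by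
  simp only [pyramid, coneBelow, mem_ofPred_eq, Fin.forall_fin_succ, Fin.sum_univ_succ, if_true,
    mem_univ_pi, Fin.tail, Pi.smul_apply, smul_eq_mul, mem_Icc, ← abs_le]
  rcases hy.lt_or_gt with hneg | hpos
  · exact iff_of_false (fun h => hneg.not_ge ((abs_nonneg _).trans h.1.1)) fun h => hneg.not_gt h.1
  · have hsum : y 0 ^ 2 * (1 + ∑ i : Fin n, ((y 0)⁻¹ * y i.succ) ^ 2) =
        y 0 ^ 2 + ∑ i : Fin n, y i.succ ^ 2 := by
      rw [mul_add, mul_one, Finset.mul_sum]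
      congr 1
      refine Finset.sum_congr rfl fun i _ => ?_
      field_simp
    rw [lt_inv_sqrt_iff hpos.le (by positivity), hsum]
    simp only [abs_mul, abs_inv, abs_of_pos hpos, inv_mul_le_one₀ hpos, le_refl, true_and, hpos]

theorem volume_pyramid_zero_true (n : ℕ) :
    volume (pyramid (0 : Fin (n + 1)) true) = volume (coneBelow (univ.pi fun _ => Icc (-1) 1)
      fun u : Fin n → ℝ => (√(1 + ∑ i, u i ^ 2))⁻¹) := by
  rw [← (volume_preserving_piFinSuccAbove (fun _ : Fin (n + 1) => ℝ) 0).measure_preimage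
    (measurableSet_coneBelow (.univ_pi fun _ => measurableSet_Icc) (by fun_prop)).nullMeasurableSet]
  refine measure_congr ?_
  filter_upwards [measure_eq_zero_iff_ae_notMem.mp (volume_setOf_apply_eq_zero 0)] with y hy
  exact propext (mem_pyramid_zero_true_iff hy)

theorem volume_pyramid_zero_true_eq_integral (n : ℕ) :
    volume (pyramid (0 : Fin (n + 1)) true) = ENNReal.ofReal
      ((∫ u : Fin n → ℝ in univ.pi fun _ => Icc (-1 : ℝ) 1,
        (1 + ∑ i, u i ^ 2) ^ (-((n + 1 : ℕ) : ℝ) / 2)) / (n + 1)) := by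
  have hint : IntegrableOn (fun u : Fin n → ℝ => (1 + ∑ i, u i ^ 2) ^ (-((n + 1 : ℕ) : ℝ) / 2))
      (univ.pi fun _ => Icc (-1) 1) :=
    (Continuous.rpow_const (by fun_prop) fun u => Or.inl (by positivity)).continuousOn
      |>.integrableOn_compact (isCompact_univ_pi fun _ => isCompact_Icc)
  rw [volume_pyramid_zero_true, volume_coneBelow (.univ_pi fun _ => measurableSet_Icc)
    (by fun_prop) fun u => by positivity, ← integral_div,
    ofReal_integral_eq_lintegral_ofReal (hint.div_const _) (ae_of_all _ fun u => by positivity)]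
  congr with u
  rw [inv_sqrt_pow_eq_rpow (by positivity), Fintype.card_fin]

theorem two_mul_integral_cube (n : ℕ) :
    2 * ∫ u : Fin n → ℝ in univ.pi fun _ => Icc (-1 : ℝ) 1,
        (1 + ∑ i, u i ^ 2) ^ (-((n + 1 : ℕ) : ℝ) / 2) =
      √π ^ (n + 1) / Gamma (((n + 1 : ℕ) : ℝ) / 2 + 1) := by
  have key := two_mul_card_mul_volume_pyramid (0 : Fin (n + 1))
  rw [volume_pyramid_zero_true_eq_integral, Fintype.card_fin,
    show 2 * ((n + 1 : ℕ) : ENNReal) = ENNReal.ofReal (2 * (n + 1)) by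
      rw [ENNReal.ofReal_mul zero_le_two]; norm_cast,
    ← ENNReal.ofReal_mul (by positivity),
    ENNReal.ofReal_eq_ofReal_iff (by positivity) (by positivity)] at key
  rw [← key]
  field_simp

end Face

end SolidAngle

/-- For every dimension `d ≥ 1`, the integral over the cube `[-1,1]^{d-1}` of
`1/(1 + x₁² + ⋯ + x_{d-1}²)^{d/2}` equals `(1/d) · π^{d/2} / Γ(d/2)`. -/
theorem stmt0 (d : ℕ) (hd : 1 ≤ d) :
    (∫ x : Fin (d - 1) → ℝ in Set.pi Set.univ (fun _ => Set.Icc (-1 : ℝ) 1),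
      (1 + ∑ i, (x i) ^ 2) ^ (-(d : ℝ) / 2))
    = (1 / d) * Real.pi ^ ((d : ℝ) / 2) / Real.Gamma ((d : ℝ) / 2) := by
  obtain ⟨n, rfl⟩ : ∃ n, d = n + 1 := ⟨d - 1, by omega⟩
  have h := SolidAngle.two_mul_integral_cube n
  rw [sqrt_pi_pow_div_Gamma n.add_one_ne_zero] at h
  exact (mul_right_inj' two_ne_zero).mp h
end

section
/- For d ≥ 1 and N ≥ 1, define V_N(s) = N^{-(d-1)} Σ_{-N ≤ n_i < N, i=1..d-1} (1 + (n_1/N)^2 + ... + (n_{d-1}/N)^2)^{-(s+1)} and V(s) = ∫_{[-1,1]^{d-1}} (1 + x_1^2 + ... + x_{d-1}^2)^{-(s+1)} dx. Then for all s with Re(s) ≥ -2, |V(s) − V_N(s)| ≤ 2^d (d−1) |s+1| / N. -/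
/-!
Tile `[-1, 1)^(d-1)` by the `(2N)^(d-1)` half-open cubes of side `1/N` whose lower corners are
the points `n/N`. On each cube the integrand differs from its value at the corner by at most
`|s+1| · 2(d-1)/N`: the map `t ↦ t^(-(s+1))` is `|s+1|`-Lipschitz on `[1, ∞)` when `Re s ≥ -2`,
and `|x² - c²| ≤ 2|x - c|` on `[-1, 1]`. Each cube has volume `N^(-(d-1))`, so summing the
local errors gives `2^(d-1) · 2(d-1)|s+1|/N`.
-/

open MeasureTheory Set

lemma norm_ofReal_cpow_sub_ofReal_cpow_le {w : ℂ} (hw : w.re ≤ 1) {a b : ℝ} (ha : 1 ≤ a)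
    (hb : 1 ≤ b) : ‖(a : ℂ) ^ w - (b : ℂ) ^ w‖ ≤ ‖w‖ * |a - b| := by
  have hderiv : ∀ t ∈ Ici (1 : ℝ),
      HasDerivWithinAt (fun t : ℝ => (t : ℂ) ^ w) (w * (t : ℂ) ^ (w - 1)) (Ici 1) t :=
    fun t ht => (Complex.hasStrictDerivAt_cpow_const
      (Complex.ofReal_mem_slitPlane.2 (one_pos.trans_le ht))).hasDerivAt.comp_ofReal
      |>.hasDerivWithinAt
  have hbound : ∀ t ∈ Ici (1 : ℝ), ‖w * (t : ℂ) ^ (w - 1)‖ ≤ ‖w‖ := fun t (ht : 1 ≤ t) => by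
    rw [norm_mul, Complex.norm_cpow_eq_rpow_re_of_pos (one_pos.trans_le ht)]
    refine mul_le_of_le_one_right (norm_nonneg w) (Real.rpow_le_one_of_one_le_of_nonpos ht ?_)
    simpa using hw
  simpa [Real.norm_eq_abs] using
    (convex_Ici (1 : ℝ)).norm_image_sub_le_of_norm_hasDerivWithin_le hderiv hbound hb ha

lemma abs_sq_sub_sq_le {x y : ℝ} (hx : |x| ≤ 1) (hy : |y| ≤ 1) :
    |x ^ 2 - y ^ 2| ≤ 2 * |x - y| := by
  rw [sq_sub_sq, abs_mul]
  exact mul_le_mul_of_nonneg_right (by linarith [abs_add_le x y]) (abs_nonneg _)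

lemma floor_mul_natCast_mem_Ico_iff {N : ℕ} (hN : 0 < N) (y : ℝ) :
    ⌊y * N⌋ ∈ Finset.Ico (-(N : ℤ)) N ↔ y ∈ Ico (-1 : ℝ) 1 := by
  have hN' : (0 : ℝ) < N := Nat.cast_pos.2 hN
  rw [Finset.mem_Ico, Int.le_floor, Int.floor_lt, mem_Ico]
  push_cast
  constructor <;> rintro ⟨h1, h2⟩ <;> constructor <;> nlinarith

def gridCube {ι : Type*} (N : ℕ) (n : ι → ℤ) : Set (ι → ℝ) :=
  pi univ fun i => Ico ((n i : ℝ) / N) ((n i + 1 : ℝ) / N)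

namespace gridCube

variable {ι : Type*} {N : ℕ}

lemma mem_iff_floor (hN : 0 < N) {n : ι → ℤ} {x : ι → ℝ} :
    x ∈ gridCube N n ↔ ∀ i, ⌊x i * N⌋ = n i := by
  have hN' : (0 : ℝ) < N := Nat.cast_pos.2 hN
  simp only [gridCube, mem_univ_pi, mem_Ico, Int.floor_eq_iff, div_le_iff₀ hN', lt_div_iff₀ hN']

lemma pairwise_disjoint (hN : 0 < N) :
    Pairwise (Function.onFun Disjoint (gridCube N : (ι → ℤ) → Set (ι → ℝ))) := by
  intro n m hnm
  refine Set.disjoint_left.2 fun x hn hm => hnm ?_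
  rw [mem_iff_floor hN] at hn hm
  exact funext fun i => (hn i).symm.trans (hm i)

lemma abs_sub_div_le {n : ι → ℤ} {x : ι → ℝ} (hx : x ∈ gridCube N n) (i : ι) :
    |x i - n i / N| ≤ 1 / N := by
  obtain ⟨h1, h2⟩ := hx i (mem_univ i)
  rw [add_div] at h2
  exact abs_sub_le_iff.2 ⟨by linarith, by linarith [one_div_nonneg.2 (Nat.cast_nonneg (α := ℝ) N)]⟩

variable [Fintype ι]

lemma biUnion_eq [DecidableEq ι] (hN : 0 < N) :
    ⋃ n ∈ Fintype.piFinset fun _ : ι => Finset.Ico (-(N : ℤ)) N, gridCube N n =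
      pi univ fun _ => Ico (-1 : ℝ) 1 := by
  ext x
  simp only [mem_iUnion, mem_iff_floor hN, exists_prop, mem_univ_pi,
    ← floor_mul_natCast_mem_Ico_iff hN, Fintype.mem_piFinset]
  exact ⟨fun ⟨n, hn, hx⟩ i => hx i ▸ hn i, fun h => ⟨_, h, fun _ => rfl⟩⟩

lemma subset_Icc [DecidableEq ι] (hN : 0 < N) {n : ι → ℤ}
    (hn : n ∈ Fintype.piFinset fun _ : ι => Finset.Ico (-(N : ℤ)) N) :
    gridCube N n ⊆ pi univ fun _ => Icc (-1 : ℝ) 1 :=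
  ((subset_biUnion_of_mem (u := gridCube N) hn).trans (biUnion_eq hN).subset).trans
    (pi_mono fun _ _ => Ico_subset_Icc_self)

lemma volume_lt_top (n : ι → ℤ) : volume (gridCube N n) < ⊤ := by
  rw [gridCube, Real.volume_pi_Ico]
  exact ENNReal.prod_lt_top fun _ _ => ENNReal.ofReal_lt_top

lemma measureReal_eq (n : ι → ℤ) :
    volume.real (gridCube N n) = ((N : ℝ) ^ Fintype.card ι)⁻¹ := by
  rw [measureReal_def, gridCube, Real.volume_pi_Ico_toReal fun i => by gcongr; linarith]
  simp_rw [← sub_div, add_sub_cancel_left, Finset.prod_const, Finset.card_univ, one_div, inv_pow]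

end gridCube

theorem norm_setIntegral_sub_gridSum_le {ι : Type*} [Fintype ι] [DecidableEq ι] {E : Type*}
    [NormedAddCommGroup E] [NormedSpace ℝ E] [CompleteSpace E] {N : ℕ} (hN : 0 < N)
    {f : (ι → ℝ) → E} (hf : IntegrableOn f (pi univ fun _ => Icc (-1 : ℝ) 1)) {C : ℝ}
    (hC : ∀ n ∈ Fintype.piFinset (fun _ : ι => Finset.Ico (-(N : ℤ)) N), ∀ x ∈ gridCube N n,
      ‖f x - f (fun i => (n i : ℝ) / N)‖ ≤ C) :
    ‖(∫ x in pi univ fun _ => Icc (-1 : ℝ) 1, f x) - ((N : ℝ) ^ Fintype.card ι)⁻¹ •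
        ∑ n ∈ Fintype.piFinset (fun _ : ι => Finset.Ico (-(N : ℤ)) N), f (fun i => (n i : ℝ) / N)‖
      ≤ 2 ^ Fintype.card ι * C := by
  set S := Fintype.piFinset fun _ : ι => Finset.Ico (-(N : ℤ)) N
  have hfS : ∀ n ∈ S, IntegrableOn f (gridCube N n) := fun n hn =>
    hf.mono_set (gridCube.subset_Icc hN hn)
  have hintegral : (∫ x in pi univ fun _ => Icc (-1 : ℝ) 1, f x) =
      ∑ n ∈ S, ∫ x in gridCube N n, f x := by
    have hae : (pi univ fun _ : ι => Ico (-1 : ℝ) 1) =ᵐ[volume] pi univ fun _ => Icc (-1 : ℝ) 1 :=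
      Measure.pi_Ico_ae_eq_pi_Icc
    rw [← setIntegral_congr_set hae, ← gridCube.biUnion_eq hN]
    exact integral_biUnion_finset _ (fun n _ => MeasurableSet.univ_pi fun _ => measurableSet_Ico)
      ((gridCube.pairwise_disjoint hN).set_pairwise _) hfS
  have hsum : ((N : ℝ) ^ Fintype.card ι)⁻¹ • ∑ n ∈ S, f (fun i => (n i : ℝ) / N) =
      ∑ n ∈ S, ∫ _ in gridCube N n, f (fun i => (n i : ℝ) / N) := by
    simp only [setIntegral_const, gridCube.measureReal_eq, Finset.smul_sum]
  have hcard : (S.card : ℝ) = (2 * N) ^ Fintype.card ι := by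
    have : (Finset.Ico (-(N : ℤ)) N).card = 2 * N := by rw [Int.card_Ico]; omega
    simp [S, Fintype.card_piFinset, this]
  rw [hintegral, hsum, ← Finset.sum_sub_distrib]
  calc ‖∑ n ∈ S, ((∫ x in gridCube N n, f x) - ∫ _ in gridCube N n, f (fun i => (n i : ℝ) / N))‖
      ≤ ∑ n ∈ S, C * volume.real (gridCube N n) := by
        refine (norm_sum_le _ _).trans (Finset.sum_le_sum fun n hn => ?_)
        rw [← integral_sub (hfS n hn) (integrableOn_const (gridCube.volume_lt_top n).ne)]
        exact norm_setIntegral_le_of_norm_le_const (gridCube.volume_lt_top n) (hC n hn)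
    _ = 2 ^ Fintype.card ι * C := by
        simp only [gridCube.measureReal_eq, Finset.sum_const, nsmul_eq_mul, hcard]
        field_simp
        ring

lemma norm_cpow_one_add_sum_sq_sub_le {ι : Type*} [Fintype ι] [DecidableEq ι] {N : ℕ}
    (hN : 0 < N) {w : ℂ} (hw : w.re ≤ 1) {n : ι → ℤ}
    (hn : n ∈ Fintype.piFinset fun _ : ι => Finset.Ico (-(N : ℤ)) N) {x : ι → ℝ}
    (hx : x ∈ gridCube N n) :
    ‖((1 + ∑ i, x i ^ 2 : ℝ) : ℂ) ^ w - ((1 + ∑ i, ((n i : ℝ) / N) ^ 2 : ℝ) : ℂ) ^ w‖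
      ≤ 2 * Fintype.card ι * ‖w‖ / N := by
  have hone : ∀ y : ι → ℝ, 1 ≤ 1 + ∑ i, y i ^ 2 := fun y => le_add_of_nonneg_right (by positivity)
  have hxI := gridCube.subset_Icc hN hn hx
  have hcI : ∀ i, |(n i : ℝ) / N| ≤ 1 := fun i => by
    obtain ⟨h1, h2⟩ := Finset.mem_Ico.1 (Fintype.mem_piFinset.1 hn i)
    have hN' : (0 : ℝ) < N := Nat.cast_pos.2 hN
    have h1' : (-N : ℝ) ≤ n i := by exact_mod_cast h1
    have h2' : (n i : ℝ) < N := by exact_mod_cast h2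
    rw [abs_le, le_div_iff₀ hN', div_le_iff₀ hN']
    constructor <;> linarith
  have hsum : |(1 + ∑ i, x i ^ 2) - (1 + ∑ i, ((n i : ℝ) / N) ^ 2)| ≤ 2 * Fintype.card ι / N :=
    calc |(1 + ∑ i, x i ^ 2) - (1 + ∑ i, ((n i : ℝ) / N) ^ 2)|
        = |∑ i, (x i ^ 2 - ((n i : ℝ) / N) ^ 2)| := by
          rw [Finset.sum_sub_distrib, add_sub_add_left_eq_sub]
      _ ≤ ∑ i, 2 * |x i - n i / N| := (Finset.abs_sum_le_sum_abs _ _).trans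
          (Finset.sum_le_sum fun i _ => abs_sq_sub_sq_le (abs_le.2 (hxI i (mem_univ i))) (hcI i))
      _ ≤ ∑ _i : ι, 2 * (1 / (N : ℝ)) :=
          Finset.sum_le_sum fun i _ => by gcongr; exact gridCube.abs_sub_div_le hx i
      _ = 2 * Fintype.card ι / N := by simp; ring
  calc _ ≤ ‖w‖ * |(1 + ∑ i, x i ^ 2) - (1 + ∑ i, ((n i : ℝ) / N) ^ 2)| :=
        norm_ofReal_cpow_sub_ofReal_cpow_le hw (hone _) (hone _)
    _ ≤ ‖w‖ * (2 * Fintype.card ι / N) := by gcongr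
    _ = 2 * Fintype.card ι * ‖w‖ / N := by ring

/-- With `V_N(s) = N^{-(d-1)} Σ_{-N ≤ n_i < N} (1 + Σ (n_i/N)²)^{-(s+1)}` and
`V(s) = ∫_{[-1,1]^{d-1}} (1 + Σ x_i²)^{-(s+1)} dx`, one has, for `Re(s) ≥ -2`,
`|V(s) − V_N(s)| ≤ 2^d (d−1) |s+1| / N`. -/
theorem stmt13 (d : ℕ) (hd : 1 ≤ d) (N : ℕ) (hN : 1 ≤ N) (s : ℂ) (hs : -2 ≤ s.re) :
    ‖(∫ x : Fin (d - 1) → ℝ in Set.pi Set.univ (fun _ => Set.Icc (-1 : ℝ) 1),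
        ((1 + ∑ i, (x i) ^ 2 : ℝ) : ℂ) ^ (-(s + 1)))
      - ((N : ℂ) ^ (d - 1 : ℕ))⁻¹ *
          ∑ n ∈ Fintype.piFinset (fun _ : Fin (d - 1) => Finset.Ico (-(N : ℤ)) (N : ℤ)),
            ((1 + ∑ i, ((n i : ℝ) / N) ^ 2 : ℝ) : ℂ) ^ (-(s + 1))‖
    ≤ 2 ^ d * (d - 1 : ℝ) * ‖s + 1‖ / N := by
  have hw : (-(s + 1)).re ≤ 1 := by
    simp only [Complex.neg_re, Complex.add_re, Complex.one_re]
    linarith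
  have hcont : Continuous fun x : Fin (d - 1) → ℝ => ((1 + ∑ i, (x i) ^ 2 : ℝ) : ℂ) ^ (-(s + 1)) :=
    (Complex.continuous_ofReal.comp (by fun_prop)).cpow continuous_const fun x =>
      Complex.ofReal_mem_slitPlane.2 (by positivity)
  have key := norm_setIntegral_sub_gridSum_le hN
    (hcont.continuousOn.integrableOn_compact (isCompact_univ_pi fun _ => isCompact_Icc))
    fun n hn x hx => norm_cpow_one_add_sum_sq_sub_le hN hw hn hx
  simp only [Fintype.card_fin, norm_neg] at key
  have hscalar : ((N : ℂ) ^ (d - 1 : ℕ))⁻¹ = (((N : ℝ) ^ (d - 1))⁻¹ : ℝ) := by push_cast; rfl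
  rw [hscalar, ← Complex.real_smul]
  refine key.trans_eq ?_
  conv_rhs => rw [← Nat.sub_add_cancel hd, pow_succ]
  push_cast [Nat.cast_sub hd]
  ring
end

section
/- Let Q(x) = a x_1^2 + b x_2^2 with a, b > 0 and define V_Q(s) = ∫_{‖x‖_∞=1} Q_{B(s)}(x)/Q_A(x)^{s+2} dλ_1 where A = diag(a,b) and B(s) = tr(A)A − 2(s+1)A². Then V_Q'(0) = −8 [√(b/a) · arctan√(a/b) + √(a/b) · arctan√(b/a)]. -/
/-!
On the vertical edges `x = (±1, t)` of the square, with `Q = a + b t²`, the integrand of `V(s)` is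
`(b - a) · d/dt [t Q^{-(s+1)}] - 2 s a Q^{-(s+1)}`, so each vertical edge contributes
`2 (b - a) (a + b)^{-(s+1)} - 2 s a J(a, b, s)` with `J(a, b, s) = ∫_{-1}^1 Q^{-(s+1)} dt`.
The horizontal edges give the same with `a` and `b` exchanged, the boundary terms cancel, and
`V(s) = -4 s (a J(a, b, s) + b J(b, a, s))`. As `J` is continuous in `s`,
`V'(0) = -4 (a J(a, b, 0) + b J(b, a, 0))`, and `a J(a, b, 0) = 2 √(a/b) arctan √(b/a)`.
-/

open MeasureTheory Matrix

/-- The induced measure on the boundary of the square `{x : ‖x‖_∞ = 1}` in `ℝ²`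
(and in general the cube boundary in `ℝ^d`). -/
noncomputable def cubeSurface (d : ℕ) : Measure (Fin d → ℝ) :=
  Measure.sum fun p : Fin d × Bool =>
    Measure.pi fun i =>
      if i = p.1 then Measure.dirac (if p.2 then (1 : ℝ) else -1)
      else volume.restrict (Set.Icc (-1 : ℝ) 1)

open Set

namespace MeasureTheory.Measure

variable {α : Type*} [MeasurableSpace α]

lemma pi_fin_two_eq_map (μ ν : Measure α) [SigmaFinite μ] [SigmaFinite ν] :
    Measure.pi ![μ, ν] = (μ.prod ν).map fun p => ![p.1, p.2] :=
  (measurePreserving_finTwoArrow_vec μ ν).symm.map_eq.symm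

lemma pi_dirac_fin_two (c : α) (ν : Measure α) [SigmaFinite ν] :
    Measure.pi ![dirac c, ν] = ν.map fun t => ![c, t] := by
  rw [pi_fin_two_eq_map, dirac_prod, map_map (g := fun p : α × α => ![p.1, p.2])
    MeasurableEquiv.finTwoArrow.symm.measurable measurable_prodMk_left]
  rfl

lemma pi_fin_two_dirac (c : α) (ν : Measure α) [SigmaFinite ν] :
    Measure.pi ![ν, dirac c] = ν.map fun t => ![t, c] := by
  rw [pi_fin_two_eq_map, prod_dirac, map_map (g := fun p : α × α => ![p.1, p.2])
    MeasurableEquiv.finTwoArrow.symm.measurable measurable_prodMk_right]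
  rfl

end MeasureTheory.Measure

section

variable {α : Type*} [MeasurableSpace α] [MeasurableSingletonClass α]

lemma measurableEmbedding_vecCons_left (c : α) : MeasurableEmbedding fun t : α => ![c, t] :=
  MeasurableEquiv.finTwoArrow.symm.measurableEmbedding.comp (measurableEmbedding_prodMk_left c)

lemma measurableEmbedding_vecCons_right (c : α) : MeasurableEmbedding fun t : α => ![t, c] :=
  MeasurableEquiv.finTwoArrow.symm.measurableEmbedding.comp (measurableEmbedding_prod_mk_right c)

end

lemma cubeSurface_two :
    cubeSurface 2 =
      (volume.restrict (Icc (-1) 1)).map (fun t => ![1, t])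
        + (volume.restrict (Icc (-1) 1)).map (fun t => ![-1, t])
        + ((volume.restrict (Icc (-1) 1)).map (fun t => ![t, 1])
          + (volume.restrict (Icc (-1) 1)).map (fun t => ![t, -1])) := by
  have h (j : Fin 2) (μ ν : Measure ℝ) :
      (fun i => if i = j then μ else ν) = if j = 0 then ![μ, ν] else ![ν, μ] := by
    funext i; fin_cases j <;> fin_cases i <;> rfl
  simp [cubeSurface, Measure.sum_fintype, Fintype.sum_prod_type, h,
    Measure.pi_dirac_fin_two, Measure.pi_fin_two_dirac]

lemma integral_cubeSurface_two (F : (Fin 2 → ℝ) → ℝ)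
    (h₁ : IntervalIntegrable (fun t => F ![1, t]) volume (-1) 1)
    (h₂ : IntervalIntegrable (fun t => F ![-1, t]) volume (-1) 1)
    (h₃ : IntervalIntegrable (fun t => F ![t, 1]) volume (-1) 1)
    (h₄ : IntervalIntegrable (fun t => F ![t, -1]) volume (-1) 1) :
    ∫ x, F x ∂cubeSurface 2 =
      (∫ t in (-1)..1, F ![1, t]) + (∫ t in (-1)..1, F ![-1, t])
        + ((∫ t in (-1)..1, F ![t, 1]) + (∫ t in (-1)..1, F ![t, -1])) := by
  rw [intervalIntegrable_iff_integrableOn_Icc_of_le (by norm_num)] at h₁ h₂ h₃ h₄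
  simp only [intervalIntegral.integral_of_le (show (-1 : ℝ) ≤ 1 by norm_num),
    ← integral_Icc_eq_integral_Ioc]
  have i₁ := (measurableEmbedding_vecCons_left (1 : ℝ)).integrable_map_iff.2 h₁
  have i₂ := (measurableEmbedding_vecCons_left (-1 : ℝ)).integrable_map_iff.2 h₂
  have i₃ := (measurableEmbedding_vecCons_right (1 : ℝ)).integrable_map_iff.2 h₃
  have i₄ := (measurableEmbedding_vecCons_right (-1 : ℝ)).integrable_map_iff.2 h₄
  rw [cubeSurface_two, integral_add_measure (i₁.add_measure i₂) (i₃.add_measure i₄),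
    integral_add_measure i₁ i₂, integral_add_measure i₃ i₄,
    (measurableEmbedding_vecCons_left _).integral_map,
    (measurableEmbedding_vecCons_left _).integral_map,
    (measurableEmbedding_vecCons_right _).integral_map,
    (measurableEmbedding_vecCons_right _).integral_map]

section

variable {R : Type*} [CommRing R]

lemma dotProduct_mulVec_fin_two_diagonal (p q : R) (x : Fin 2 → R) :
    x ⬝ᵥ !![p, 0; 0, q] *ᵥ x = p * x 0 ^ 2 + q * x 1 ^ 2 := by
  simp only [dotProduct, mulVec, of_apply, cons_val', cons_val_fin_one, Fin.sum_univ_two,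
    cons_val_zero, cons_val_one, zero_mul, add_zero, zero_add]
  ring

lemma trace_smul_sub_smul_mul_self_fin_two_diagonal (a b c : R) :
    (!![a, 0; 0, b] : Matrix (Fin 2) (Fin 2) R).trace • !![a, 0; 0, b]
        - c • (!![a, 0; 0, b] * !![a, 0; 0, b])
      = !![(a + b) * a - c * a ^ 2, 0; 0, (a + b) * b - c * b ^ 2] := by
  ext i j
  fin_cases i <;> fin_cases j <;> simp [trace, sq]

end

noncomputable def quadRpowIntegral (a b s : ℝ) : ℝ :=
  ∫ t in (-1)..1, (a + b * t ^ 2) ^ (-(s + 1))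

section

variable {a b : ℝ}

lemma hasDerivAt_mul_quad_rpow (s t : ℝ) (h : 0 < a + b * t ^ 2) :
    HasDerivAt (fun t => t * (a + b * t ^ 2) ^ (-(s + 1)))
      ((a - (2 * s + 1) * b * t ^ 2) * (a + b * t ^ 2) ^ (-(s + 2))) t := by
  have hQ : HasDerivAt (fun t => a + b * t ^ 2) (b * (2 * t)) t := by
    simpa using ((hasDerivAt_pow 2 t).const_mul b).const_add a
  refine ((hasDerivAt_id t).mul (hQ.rpow_const (p := -(s + 1)) (Or.inl h.ne'))).congr_deriv ?_
  rw [show -(s + 1) - 1 = -(s + 2) by ring, show -(s + 1) = 1 + -(s + 2) by ring,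
    Real.rpow_add h 1, Real.rpow_one]
  simp only [id_eq]
  ring

lemma continuous_quad_rpow (ha : 0 < a) (hb : 0 ≤ b) (p : ℝ) :
    Continuous fun t : ℝ => (a + b * t ^ 2) ^ p :=
  (by fun_prop : Continuous fun t : ℝ => a + b * t ^ 2).rpow_const
    fun t => Or.inl (by positivity)

lemma integral_edge (ha : 0 < a) (hb : 0 ≤ b) (s : ℝ) :
    ∫ t in (-1)..1,
        ((a + b) * a - 2 * (s + 1) * a ^ 2 + ((a + b) * b - 2 * (s + 1) * b ^ 2) * t ^ 2)
          / (a + b * t ^ 2) ^ (s + 2)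
      = 2 * (b - a) * (a + b) ^ (-(s + 1)) - 2 * s * a * quadRpowIntegral a b s := by
  have hQ (t : ℝ) : 0 < a + b * t ^ 2 := by positivity
  have hint : IntervalIntegrable
      (fun t => (a - (2 * s + 1) * b * t ^ 2) * (a + b * t ^ 2) ^ (-(s + 2))) volume (-1) 1 :=
    ((by fun_prop : Continuous fun t : ℝ => a - (2 * s + 1) * b * t ^ 2).mul
      (continuous_quad_rpow ha hb _)).intervalIntegrable _ _
  have hftc : ∫ t in (-1)..1, (a - (2 * s + 1) * b * t ^ 2) * (a + b * t ^ 2) ^ (-(s + 2))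
      = 2 * (a + b) ^ (-(s + 1)) := by
    rw [intervalIntegral.integral_eq_sub_of_hasDerivAt
      (fun t _ => hasDerivAt_mul_quad_rpow s t (hQ t)) hint]
    norm_num
    ring
  have hsplit (t : ℝ) :
      ((a + b) * a - 2 * (s + 1) * a ^ 2 + ((a + b) * b - 2 * (s + 1) * b ^ 2) * t ^ 2)
          / (a + b * t ^ 2) ^ (s + 2)
        = (b - a) * ((a - (2 * s + 1) * b * t ^ 2) * (a + b * t ^ 2) ^ (-(s + 2)))
          - 2 * s * a * (a + b * t ^ 2) ^ (-(s + 1)) := by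
    rw [show -(s + 1) = 1 + -(s + 2) by ring, Real.rpow_add (hQ t) 1, Real.rpow_one,
      Real.rpow_neg (hQ t).le, div_eq_mul_inv]
    ring
  simp only [hsplit]
  rw [intervalIntegral.integral_sub (hint.const_mul _)
      (((continuous_quad_rpow ha hb _).intervalIntegrable _ _).const_mul _),
    intervalIntegral.integral_const_mul, intervalIntegral.integral_const_mul, hftc,
    quadRpowIntegral]
  ring

lemma continuous_quadRpowIntegral (ha : 0 < a) (hb : 0 ≤ b) :
    Continuous (quadRpowIntegral a b) :=
  intervalIntegral.continuous_parametric_intervalIntegral_of_continuous'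
    ((by fun_prop : Continuous fun p : ℝ × ℝ => a + b * p.2 ^ 2).rpow (by fun_prop)
      fun p => Or.inl (by positivity)) _ _

lemma mul_quadRpowIntegral_zero (ha : 0 < a) (hb : 0 < b) :
    a * quadRpowIntegral a b 0 = 2 * √(a / b) * Real.arctan √(b / a) := by
  set c := √(b / a)
  have hc : 0 < c := Real.sqrt_pos.2 (div_pos hb ha)
  have hc2 : c ^ 2 = b / a := Real.sq_sqrt (div_pos hb ha).le
  have hinv : c⁻¹ = √(a / b) := by rw [← Real.sqrt_inv, inv_div]
  have hsubst (t : ℝ) : (a + b * t ^ 2) ^ (-(0 + 1) : ℝ) = a⁻¹ * (1 + (c * t) ^ 2)⁻¹ := by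
    rw [show (-(0 + 1) : ℝ) = -1 by norm_num, Real.rpow_neg_one, mul_pow, hc2, ← mul_inv]
    field_simp
  simp only [quadRpowIntegral, hsubst, intervalIntegral.integral_const_mul,
    intervalIntegral.integral_comp_mul_left (fun u => (1 + u ^ 2)⁻¹) hc.ne',
    integral_inv_one_add_sq, mul_neg_one, mul_one, Real.arctan_neg, smul_eq_mul, hinv]
  field_simp
  ring

lemma integral_cubeSurface_two_quad (ha : 0 < a) (hb : 0 < b) (s : ℝ) :
    ∫ x, (((a + b) * a - 2 * (s + 1) * a ^ 2) * x 0 ^ 2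
          + ((a + b) * b - 2 * (s + 1) * b ^ 2) * x 1 ^ 2)
        / (a * x 0 ^ 2 + b * x 1 ^ 2) ^ (s + 2) ∂cubeSurface 2
      = -4 * s * (a * quadRpowIntegral a b s + b * quadRpowIntegral b a s) := by
  have hcont (a b : ℝ) (ha : 0 < a) (hb : 0 < b) : Continuous fun t : ℝ =>
      ((a + b) * a - 2 * (s + 1) * a ^ 2 + ((a + b) * b - 2 * (s + 1) * b ^ 2) * t ^ 2)
        / (a + b * t ^ 2) ^ (s + 2) :=
    (by fun_prop : Continuous fun t : ℝ => _).div (continuous_quad_rpow ha hb.le _)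
      fun t => (Real.rpow_pos_of_pos (by positivity) _).ne'
  have hswap : (fun t : ℝ => (((a + b) * a - 2 * (s + 1) * a ^ 2) * t ^ 2
        + ((a + b) * b - 2 * (s + 1) * b ^ 2)) / (a * t ^ 2 + b) ^ (s + 2))
      = fun t => ((b + a) * b - 2 * (s + 1) * b ^ 2 + ((b + a) * a - 2 * (s + 1) * a ^ 2) * t ^ 2)
        / (b + a * t ^ 2) ^ (s + 2) := by
    funext t
    rw [add_comm b a, add_comm (a * t ^ 2), add_comm (_ * t ^ 2)]
  rw [integral_cubeSurface_two]
  all_goals simp only [cons_val_zero, cons_val_one, one_pow, neg_one_sq, mul_one, hswap]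
  · rw [integral_edge ha hb.le, integral_edge hb ha.le, add_comm b a]
    ring
  all_goals first
    | exact (hcont a b ha hb).intervalIntegrable _ _
    | exact (hcont b a hb ha).intervalIntegrable _ _

end

lemma hasDerivAt_mul_of_continuousAt {g : ℝ → ℝ} (hg : ContinuousAt g 0) :
    HasDerivAt (fun s => s * g s) (g 0) 0 := by
  rw [hasDerivAt_iff_tendsto_slope]
  refine (hg.tendsto.mono_left nhdsWithin_le_nhds).congr' ?_
  filter_upwards [self_mem_nhdsWithin] with s (hs : s ≠ 0)
  rw [slope_def_field]
  field_simp
  ring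

/-- For `Q(x) = a x₁² + b x₂²` with `a, b > 0`, `A = diag(a,b)`,
`B(s) = tr(A)A − 2(s+1)A²` and `V_Q(s) = ∫_{‖x‖_∞=1} Q_{B(s)}(x)/Q_A(x)^{s+2} dλ₁`,
one has `V_Q'(0) = −8[√(b/a)·arctan √(a/b) + √(a/b)·arctan √(b/a)]`. -/
theorem stmt15 (a b : ℝ) (ha : 0 < a) (hb : 0 < b)
    (A : Matrix (Fin 2) (Fin 2) ℝ) (hA : A = !![a, 0; 0, b])
    (B : ℝ → Matrix (Fin 2) (Fin 2) ℝ)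
    (hB : ∀ s : ℝ, B s = A.trace • A - (2 * (s + 1)) • (A * A))
    (V : ℝ → ℝ)
    (hV : ∀ s : ℝ, V s =
      ∫ x, (x ⬝ᵥ (B s).mulVec x) / (x ⬝ᵥ A.mulVec x) ^ (s + 2) ∂(cubeSurface 2)) :
    deriv V 0
      = -8 * (Real.sqrt (b / a) * Real.arctan (Real.sqrt (a / b))
          + Real.sqrt (a / b) * Real.arctan (Real.sqrt (b / a))) := by
  set g : ℝ → ℝ := fun s => -4 * (a * quadRpowIntegral a b s + b * quadRpowIntegral b a s)
  have hVg : V = fun s => s * g s := by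
    funext s
    rw [hV, hB, hA, trace_smul_sub_smul_mul_self_fin_two_diagonal]
    simp only [dotProduct_mulVec_fin_two_diagonal]
    rw [integral_cubeSurface_two_quad ha hb]
    ring
  have hg : Continuous g := by
    have := continuous_quadRpowIntegral ha hb.le
    have := continuous_quadRpowIntegral hb ha.le
    fun_prop
  rw [hVg, (hasDerivAt_mul_of_continuousAt hg.continuousAt).deriv]
  simp only [g, mul_quadRpowIntegral_zero ha hb, mul_quadRpowIntegral_zero hb ha]
  ring
end
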